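/- Let ℓ be a prime number and n ≥ 1 an integer. The set of quasi-unipotent n × n matrices over K is a closed subset of the space of n × n matrices over K. -/

import Mathlib

/-!
Over an algebraically closed field a matrix is quasi-unipotent exactly when every root of its
characteristic polynomial is a root of unity. In a nonarchimedean field with `‖ℓ‖ < 1` the roots
of unity are uniformly separated: if `ζ ≠ 1` has order `k` and `p ∣ k` is prime, then
`η = ζ ^ (k / p)` satisfies `‖ℓ‖ ≤ ‖p‖ ≤ ‖η - 1‖ ≤ ‖ζ - 1‖`, the middle inequality coming from
`∏_{0 < i < p} (1 - η ^ i) = p`. So they form a closed subset of `K`. Finally, the set of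
matrices all of whose eigenvalues lie in a closed set `S` is closed: if `A` has an eigenvalue `α`
with `ball α d` disjoint from `S`, then `‖χ_B(α)‖ < d ^ n` for `B` near `A`, which forces an
eigenvalue of `B` into that ball.
-/

open Polynomial

section Ultrametric

variable {K : Type*} [NormedField K] [IsUltrametricDist K]

open IsUltrametricDist

theorem norm_natCast_eq_one_of_coprime {a b : ℕ} (hab : a.Coprime b) (hb : ‖(b : K)‖ < 1) :
    ‖(a : K)‖ = 1 := by
  obtain ⟨u, v, huv⟩ := Nat.isCoprime_iff_coprime.mpr hab
  have hbezout : (u : K) * a + (v : K) * b = 1 := by simpa using congrArg (Int.cast : ℤ → K) huv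
  have hvb : ‖(v : K) * b‖ < 1 := by
    rw [norm_mul]
    exact (mul_le_of_le_one_left (norm_nonneg _) (norm_intCast_le_one K v)).trans_lt hb
  have hua : 1 ≤ ‖(u : K) * a‖ := by
    have := norm_add_le_max ((u : K) * a) ((v : K) * b)
    rw [hbezout, norm_one] at this
    exact (le_max_iff.mp this).resolve_right hvb.not_ge
  refine le_antisymm (norm_natCast_le_one K a) ?_
  rw [norm_mul] at hua
  exact hua.trans (mul_le_of_le_one_left (norm_nonneg _) (norm_intCast_le_one K u))

theorem norm_natCast_le_norm_natCast_of_prime {ℓ p : ℕ} (hℓ : ‖(ℓ : K)‖ < 1) (hp : p.Prime) :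
    ‖(ℓ : K)‖ ≤ ‖(p : K)‖ := by
  by_cases hpℓ : p ∣ ℓ
  · obtain ⟨c, rfl⟩ := hpℓ
    rw [Nat.cast_mul, norm_mul]
    exact mul_le_of_le_one_right (norm_nonneg _) (norm_natCast_le_one K c)
  · rw [norm_natCast_eq_one_of_coprime ((Nat.Prime.coprime_iff_not_dvd hp).mpr hpℓ) hℓ]
    exact hℓ.le

theorem norm_pow_sub_one_le {x : K} (hx : ‖x‖ ≤ 1) (m : ℕ) : ‖x ^ m - 1‖ ≤ ‖x - 1‖ := by
  rw [← geom_sum_mul, norm_mul]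
  refine mul_le_of_le_one_left (norm_nonneg _) ?_
  exact norm_sum_le_of_forall_le_of_nonneg zero_le_one fun i _ ↦ by
    rw [norm_pow]; exact pow_le_one₀ (norm_nonneg _) hx

theorem IsPrimitiveRoot.norm_natCast_le_norm_sub_one {ζ : K} {k : ℕ} (hζ : IsPrimitiveRoot ζ k)
    (hk : 2 ≤ k) : ‖(k : K)‖ ≤ ‖ζ - 1‖ := by
  obtain ⟨j, rfl⟩ := Nat.exists_eq_add_of_le' hk
  have hprod := (hζ : IsPrimitiveRoot ζ (j + 1 + 1)).prod_one_sub_pow_eq_order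
  rw [Finset.prod_range_succ', zero_add, pow_one] at hprod
  have hnorm : ‖ζ‖ = 1 := (hζ.isOfFinOrder (by omega)).norm_eq_one
  have hfactors : ‖∏ i ∈ Finset.range j, (1 - ζ ^ (i + 1 + 1))‖ ≤ 1 := by
    rw [norm_prod]
    refine Finset.prod_le_one (fun _ _ ↦ norm_nonneg _) fun i _ ↦ ?_
    rw [sub_eq_add_neg]
    refine (norm_add_le_max _ _).trans ?_
    simp [hnorm]
  rw [← norm_sub_rev, show j + 2 = j + 1 + 1 by rfl, Nat.cast_add_one, ← hprod, norm_mul]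
  exact mul_le_of_le_one_left (norm_nonneg _) hfactors

theorem IsOfFinOrder.norm_natCast_le_norm_sub_one {ℓ : ℕ} (hℓ : ‖(ℓ : K)‖ < 1) {ζ : K}
    (hζ : IsOfFinOrder ζ) (hζ1 : ζ ≠ 1) : ‖(ℓ : K)‖ ≤ ‖ζ - 1‖ := by
  set k := orderOf ζ
  set p := k.minFac
  have hp : p.Prime := Nat.minFac_prime (by simpa [k] using hζ1)
  have hη : IsPrimitiveRoot (ζ ^ (k / p)) p :=
    (IsPrimitiveRoot.orderOf ζ).pow hζ.orderOf_pos (Nat.div_mul_cancel k.minFac_dvd).symm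
  calc ‖(ℓ : K)‖ ≤ ‖(p : K)‖ := norm_natCast_le_norm_natCast_of_prime hℓ hp
    _ ≤ ‖ζ ^ (k / p) - 1‖ := hη.norm_natCast_le_norm_sub_one hp.two_le
    _ ≤ ‖ζ - 1‖ := norm_pow_sub_one_le hζ.norm_eq_one.le _

theorem IsOfFinOrder.norm_natCast_le_norm_sub {ℓ : ℕ} (hℓ : ‖(ℓ : K)‖ < 1) {ζ η : K}
    (hζ : IsOfFinOrder ζ) (hη : IsOfFinOrder η) (hne : ζ ≠ η) : ‖(ℓ : K)‖ ≤ ‖ζ - η‖ := by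
  have hη0 : η ≠ 0 := by rintro rfl; simpa using hη.norm_eq_one
  have hinv : IsOfFinOrder η⁻¹ := by
    obtain ⟨m, hm, hηm⟩ := isOfFinOrder_iff_pow_eq_one.mp hη
    exact isOfFinOrder_iff_pow_eq_one.mpr ⟨m, hm, by rw [inv_pow, hηm, inv_one]⟩
  have hquot : ζ - η = (ζ * η⁻¹ - 1) * η := by field_simp
  rw [hquot, norm_mul, hη.norm_eq_one, mul_one]
  exact (hζ.mul hinv).norm_natCast_le_norm_sub_one hℓ (mt (mul_inv_eq_one₀ hη0).mp hne)

theorem isClosed_setOf_isOfFinOrder {ℓ : ℕ} (hℓ0 : (ℓ : K) ≠ 0) (hℓ1 : ‖(ℓ : K)‖ < 1) :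
    IsClosed {ζ : K | IsOfFinOrder ζ} :=
  Metric.isClosed_of_pairwise_le_dist (norm_pos_iff.mpr hℓ0) fun ζ hζ η hη hne ↦
    (hζ.norm_natCast_le_norm_sub hℓ1 hη hne).trans_eq (dist_eq_norm ζ η).symm

end Ultrametric

theorem Polynomial.Splits.pow_natDegree_le_norm_eval {K : Type*} [NormedField K] {p : K[X]}
    (hsplit : p.Splits) (hmonic : p.Monic) {α : K} {d : ℝ} (hd : 0 ≤ d)
    (h : ∀ β ∈ p.roots, d ≤ ‖α - β‖) : d ^ p.natDegree ≤ ‖p.eval α‖ := by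
  rw [hsplit.eval_eq_prod_roots_of_monic hmonic, hsplit.natDegree_eq_card_roots]
  calc d ^ p.roots.card = (p.roots.map fun _ ↦ d).prod := by simp
    _ ≤ (p.roots.map fun β ↦ ‖α - β‖).prod := Multiset.prod_map_le_prod_map₀ _ _ (fun _ _ ↦ hd) h
    _ = ‖(p.roots.map (α - ·)).prod‖ :=
      ((map_multiset_prod (normHom : K →*₀ ℝ) _).trans (by rw [Multiset.map_map]; rfl)).symm

def IsQuasiUnipotent {R : Type*} [Ring R] (a : R) : Prop :=
  ∃ m : ℕ, 1 ≤ m ∧ IsNilpotent (a ^ m - 1)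

namespace Matrix

variable {n K : Type*} [Fintype n] [DecidableEq n]

theorem continuous_eval_charpoly {R : Type*} [CommRing R] [TopologicalSpace R]
    [IsTopologicalRing R] (t : R) : Continuous fun A : Matrix n n R ↦ A.charpoly.eval t := by
  simp_rw [eval_charpoly]
  exact (continuous_const.sub continuous_id).matrix_det

section Field

variable [Field K]

theorem isOfFinOrder_of_isNilpotent_pow_sub_one {A : Matrix n n K} {m : ℕ} (hm : m ≠ 0)
    (hA : IsNilpotent (A ^ m - 1)) {β : K} (hβ : A.charpoly.IsRoot β) : IsOfFinOrder β := by
  have hcharpoly : (A ^ m - 1).charpoly = X ^ Fintype.card n :=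
    sub_eq_zero.mp (isNilpotent_charpoly_sub_pow_of_isNilpotent hA).eq_zero
  have hspec : β ^ m - 1 ∈ spectrum K (A ^ m - 1) := by
    have := spectrum.subset_polynomial_aeval A (X ^ m - 1)
      ⟨β, mem_spectrum_iff_isRoot_charpoly.mpr hβ, rfl⟩
    simpa using this
  rw [mem_spectrum_iff_isRoot_charpoly, hcharpoly, IsRoot, eval_pow, eval_X] at hspec
  exact isOfFinOrder_iff_pow_eq_one.mpr
    ⟨m, Nat.pos_of_ne_zero hm, sub_eq_zero.mp (eq_zero_of_pow_eq_zero hspec)⟩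

theorem isNilpotent_pow_sub_one_of_forall_mem_roots {A : Matrix n n K} (hA : A.charpoly.Splits)
    {m : ℕ} (h : ∀ β ∈ A.charpoly.roots, β ^ m = 1) : IsNilpotent (A ^ m - 1) := by
  have hdvd : A.charpoly ∣ (X ^ m - 1) ^ Fintype.card n := by
    rw [← A.charpoly_natDegree_eq_dim, hA.natDegree_eq_card_roots, ← Multiset.prod_replicate,
      ← Multiset.map_const']
    conv_lhs => rw [hA.eq_prod_roots_of_monic A.charpoly_monic]
    refine Multiset.prod_dvd_prod_of_dvd _ _ fun β hβ ↦ ?_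
    simpa only [← C_pow, h β hβ, C_1] using sub_dvd_pow_sub_pow X (C β) m
  obtain ⟨q, hq⟩ := hdvd
  refine ⟨Fintype.card n, ?_⟩
  have := congrArg (aeval A) hq
  rwa [map_mul, aeval_self_charpoly, zero_mul, map_pow, map_sub, map_pow, aeval_X, map_one] at this

theorem isQuasiUnipotent_iff_forall_mem_roots [IsAlgClosed K] (A : Matrix n n K) :
    IsQuasiUnipotent A ↔ ∀ β ∈ A.charpoly.roots, IsOfFinOrder β := by
  constructor
  · rintro ⟨m, hm, hA⟩ β hβ
    exact isOfFinOrder_of_isNilpotent_pow_sub_one (by omega) hA (isRoot_of_mem_roots hβ)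
  · intro h
    refine ⟨(A.charpoly.roots.map orderOf).prod, ?_,
      isNilpotent_pow_sub_one_of_forall_mem_roots (IsAlgClosed.splits _) fun β hβ ↦ ?_⟩
    · refine Nat.one_le_iff_ne_zero.mpr (Multiset.prod_ne_zero fun h0 ↦ ?_)
      obtain ⟨β, hβ, hβ0⟩ := Multiset.mem_map.mp h0
      exact (h β hβ).orderOf_pos.ne' hβ0
    · exact orderOf_dvd_iff_pow_eq_one.mp (Multiset.dvd_prod (Multiset.mem_map_of_mem _ hβ))

end Field

theorem isClosed_setOf_forall_mem_roots_charpoly [NormedField K] [IsAlgClosed K] {S : Set K}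
    (hS : IsClosed S) : IsClosed {A : Matrix n n K | ∀ β ∈ A.charpoly.roots, β ∈ S} := by
  rw [← isOpen_compl_iff, isOpen_iff_forall_mem_open]
  intro A hA
  obtain ⟨α, hα, hαS⟩ : ∃ α ∈ A.charpoly.roots, α ∉ S := by
    simpa only [Set.mem_compl_iff, Set.mem_ofPred_eq, not_forall, exists_prop] using hA
  obtain ⟨d, hd, hball⟩ := Metric.isOpen_iff.mp hS.isOpen_compl α hαS
  refine ⟨{B | ‖B.charpoly.eval α‖ < d ^ Fintype.card n}, fun B hB hBS ↦ ?_,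
    isOpen_lt (continuous_eval_charpoly α).norm continuous_const, ?_⟩
  · have hfar : ∀ β ∈ B.charpoly.roots, d ≤ ‖α - β‖ := fun β hβ ↦ by
      have : β ∉ Metric.ball α d := fun h ↦ hball h (hBS β hβ)
      simpa [dist_eq_norm, norm_sub_rev] using this
    have := (IsAlgClosed.splits B.charpoly).pow_natDegree_le_norm_eval B.charpoly_monic hd.le hfar
    rw [charpoly_natDegree_eq_dim] at this
    exact this.not_gt hB
  · rw [Set.mem_ofPred_eq, (isRoot_of_mem_roots hα).eq_zero, norm_zero]
    positivity

end Matrix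

theorem stmt4_general (ℓ : ℕ) (hℓprime : ℓ.Prime)
    (K : Type*) [NormedField K] [IsAlgClosed K]
    (hna : IsNonarchimedean (fun x : K => ‖x‖))
    (hnorm : ‖(ℓ : K)‖ = (ℓ : ℝ)⁻¹)
    (n : ℕ) :
    IsClosed {A : Matrix (Fin n) (Fin n) K | ∃ m : ℕ, 1 ≤ m ∧ IsNilpotent (A ^ m - 1)} := by
  have := IsUltrametricDist.isUltrametricDist_of_isNonarchimedean_norm hna
  have hℓ1 : ‖(ℓ : K)‖ < 1 := hnorm ▸ inv_lt_one_of_one_lt₀ (by exact_mod_cast hℓprime.one_lt)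
  have hℓ0 : (ℓ : K) ≠ 0 := norm_ne_zero_iff.mp (hnorm ▸ by simp [hℓprime.ne_zero])
  have hsets : {A : Matrix (Fin n) (Fin n) K | IsQuasiUnipotent A} =
      {A | ∀ β ∈ A.charpoly.roots, β ∈ {ζ : K | IsOfFinOrder ζ}} :=
    Set.ext Matrix.isQuasiUnipotent_iff_forall_mem_roots
  exact hsets ▸
    Matrix.isClosed_setOf_forall_mem_roots_charpoly (isClosed_setOf_isOfFinOrder hℓ0 hℓ1)

/-- Let `ℓ` be a prime and `K` an algebraically closed normed field with
nonarchimedean norm satisfying `‖(ℓ : K)‖ = (ℓ : ℝ)⁻¹`. For `n ≥ 1`, the set of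
quasi-unipotent `n × n` matrices over `K` is closed in the space of `n × n` matrices
(with the entrywise topology). -/
theorem stmt4 (ℓ : ℕ) (hℓprime : ℓ.Prime)
    (K : Type*) [NormedField K] [IsAlgClosed K]
    (hna : IsNonarchimedean (fun x : K => ‖x‖))
    (hnorm : ‖(ℓ : K)‖ = (ℓ : ℝ)⁻¹)
    (n : ℕ) (hn : 1 ≤ n) :
    IsClosed {A : Matrix (Fin n) (Fin n) K | ∃ m : ℕ, 1 ≤ m ∧ IsNilpotent (A ^ m - 1)} :=
  stmt4_general ℓ hℓprime K hna hnorm n
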